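/- Let T be a contraction on a complex Hilbert space H whose defect spaces 𝒟_T and 𝒟_{T*} both have finite dimension N, and let E be a complex Hilbert space of dimension N. If U is a unitary operator on H ⊕ E whose compression to H equals T, then there exist unitary operators (surjective linear isometries) ω : E → 𝒟_{T*} and ω_* : E → 𝒟_T such that for all x ∈ H and e ∈ E, U(x ⊕ e) = (T x + D_{T*}(ω e)) ⊕ (ω_*⁻¹(D_T x) − ω_*⁻¹(T*(ω e))); here D_T x ∈ 𝒟_T, T* maps 𝒟_{T*} into 𝒟_T, and ω_*⁻¹ is the inverse (= adjoint) of ω_*. -/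

import Mathlib

open scoped InnerProductSpace
open Filter Topology

/-- The numerical range of a bounded operator: `W(T) = {⟨Tx, x⟩ : ‖x‖ = 1}`
(written with Mathlib's inner product, which is linear in the second variable). -/
def numericalRange {H : Type*} [NormedAddCommGroup H] [InnerProductSpace ℂ H]
    (T : H →L[ℂ] H) : Set ℂ :=
  {z | ∃ x : H, ‖x‖ = 1 ∧ (inner ℂ x (T x) : ℂ) = z}

/-- The defect operator `D_T = (I - T*T)^{1/2}` of a contraction. -/
noncomputable def defectOp {H : Type*} [NormedAddCommGroup H] [InnerProductSpace ℂ H]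
    [CompleteSpace H] (T : H →L[ℂ] H) : H →L[ℂ] H :=
  CFC.sqrt (1 - ContinuousLinearMap.adjoint T * T)

/-- The defect space `𝒟_T = closure (range D_T)`. -/
noncomputable def defectSpace {H : Type*} [NormedAddCommGroup H] [InnerProductSpace ℂ H]
    [CompleteSpace H] (T : H →L[ℂ] H) : Submodule ℂ H :=
  (LinearMap.range (defectOp T : H →ₗ[ℂ] H)).topologicalClosure

/-- `U` is a unitary dilation of `T` on the orthogonal direct sum `H ⊕ E`
(realized as `WithLp 2 (H × E)`): `U` is unitary and the compression of `U` to `H` is `T`. -/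
def IsUnitaryDilation {H E : Type*} [NormedAddCommGroup H] [InnerProductSpace ℂ H]
    [CompleteSpace H] [NormedAddCommGroup E] [InnerProductSpace ℂ E] [CompleteSpace E]
    (T : H →L[ℂ] H) (U : WithLp 2 (H × E) →L[ℂ] WithLp 2 (H × E)) : Prop :=
  U ∈ unitary (WithLp 2 (H × E) →L[ℂ] WithLp 2 (H × E)) ∧
    ∀ x : H, T x = (WithLp.equiv 2 (H × E) (U ((WithLp.equiv 2 (H × E)).symm (x, 0)))).1

/-!
Write `U` as a block operator `[[T, B], [C, D]]` on `H ⊕ E`. Since `U` is isometric,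
`‖C x‖² = ‖x‖² - ‖T x‖² = ‖D_T x‖²`; since `U*` is a unitary dilation of `T*` with lower-left
block `B*`, likewise `‖B* y‖ = ‖D_{T*} y‖`. As `dim E = dim 𝒟_T = dim 𝒟_{T*}`, these norm
identities yield unitaries with `ω_* C = D_T` and `ω B* = D_{T*}`, i.e. `B = D_{T*} ω`. Finally
the two columns of `U` are orthogonal; combined with the intertwining `T D_T = D_{T*} T` this
says that `ω_* D e + T* ω e`, a vector of `𝒟_T`, is orthogonal to the range of `D_T`, hence zero.
-/

open Polynomial ContinuousLinearMap WithLp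

theorem SemiconjBy.aeval {R A : Type*} [CommSemiring R] [Semiring A] [Algebra R A] {t a b : A}
    (h : SemiconjBy t a b) (p : R[X]) :
    SemiconjBy t (Polynomial.aeval a p) (Polynomial.aeval b p) := by
  induction p using Polynomial.induction_on' with
  | add p q hp hq => simpa only [map_add] using hp.add_right hq
  | monomial n r =>
    simp only [aeval_monomial]
    exact SemiconjBy.mul_right (Algebra.commute_algebraMap_right r t) (h.pow_right n)

theorem SemiconjBy.cfc_real {A : Type*} [CStarAlgebra A] {t a b : A} (h : SemiconjBy t a b)
    (ha : IsSelfAdjoint a) (hb : IsSelfAdjoint b) {f : ℝ → ℝ} (hf : Continuous f) :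
    SemiconjBy t (cfc f a) (cfc f b) := by
  set K := spectrum ℝ a ∪ spectrum ℝ b
  have hK : Bornology.IsBounded K :=
    ((ContinuousFunctionalCalculus.isCompact_spectrum a).union
      (ContinuousFunctionalCalculus.isCompact_spectrum b)).isBounded
  choose p hp using fun n : ℕ => exists_polynomial_near_of_continuousOn (sInf K) (sSup K) f
    hf.continuousOn (1 / (n + 1)) Nat.one_div_pos_of_nat
  have hconv : TendstoUniformlyOn (fun n => (p n).eval) f atTop K := by
    rw [Metric.tendstoUniformlyOn_iff]
    intro ε hε
    obtain ⟨N, hN⟩ := exists_nat_one_div_lt hε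
    filter_upwards [eventually_ge_atTop N] with n hn x hx
    rw [dist_eq_norm, Real.norm_eq_abs, abs_sub_comm]
    refine (hp n x (hK.subset_Icc_sInf_sSup hx)).trans_le (hN.le.trans' ?_)
    gcongr
  have hlim {c : A} (hc : IsSelfAdjoint c) (hcK : spectrum ℝ c ⊆ K) :
      Tendsto (fun n => Polynomial.aeval c (p n)) atTop (𝓝 (cfc f c)) := by
    have := tendsto_cfc_fun (hconv.mono hcK) (.of_forall fun n => (p n).continuousOn)
    simpa only [cfc_polynomial _ c hc] using this
  exact tendsto_nhds_unique
    (((hlim ha Set.subset_union_left).const_mul t).congr fun n => (h.aeval (p n)).eq)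
    ((hlim hb Set.subset_union_right).mul_const t)

theorem LinearMap.exists_linearIsometryEquiv_range_of_norm_eq {𝕜 E F G : Type*} [Field 𝕜]
    [AddCommGroup E] [Module 𝕜 E] [NormedAddCommGroup F] [Module 𝕜 F]
    [NormedAddCommGroup G] [Module 𝕜 G] [FiniteDimensional 𝕜 G]
    (S : E →ₗ[𝕜] F) (R : E →ₗ[𝕜] G) (hnorm : ∀ x, ‖R x‖ = ‖S x‖)
    (hdim : Module.finrank 𝕜 G = Module.finrank 𝕜 (range S)) :
    ∃ φ : G ≃ₗᵢ[𝕜] range S, ∀ x, (φ (R x) : F) = S x := by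
  have hker : ker S ≤ ker R := fun x hx => by
    rw [mem_ker, ← norm_eq_zero, hnorm, mem_ker.1 hx, norm_zero]
  let V : range S →ₗ[𝕜] G := (ker S).liftQ R hker ∘ₗ S.quotKerEquivRange.symm.toLinearMap
  have hV (x : E) : V ⟨S x, mem_range_self S x⟩ = R x := by
    simp [V, quotKerEquivRange_symm_apply_image]
  let li : range S →ₗᵢ[𝕜] G :=
    ⟨V, by rintro ⟨_, x, rfl⟩; exact (congrArg norm (hV x)).trans (hnorm x)⟩
  have : FiniteDimensional 𝕜 (range S) := .of_injective V li.injective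
  refine ⟨(li.toLinearIsometryEquiv hdim.symm).symm, fun x => ?_⟩
  rw [← hV x]
  exact congrArg Subtype.val ((li.toLinearIsometryEquiv hdim.symm).symm_apply_apply _)

section Defect

variable {H : Type*} [NormedAddCommGroup H] [InnerProductSpace ℂ H] [CompleteSpace H]
  {T : H →L[ℂ] H}

theorem one_sub_adjoint_mul_self_nonneg (hT : ‖T‖ ≤ 1) : 0 ≤ 1 - adjoint T * T := by
  rw [sub_nonneg, ← star_eq_adjoint]
  refine (CStarAlgebra.norm_le_one_iff_of_nonneg _ (star_mul_self_nonneg T)).1 ?_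
  rw [CStarRing.norm_star_mul_self]
  exact mul_le_one₀ hT (norm_nonneg T) hT

theorem defectOp_mul_self (hT : ‖T‖ ≤ 1) : defectOp T * defectOp T = 1 - adjoint T * T :=
  CFC.sqrt_mul_sqrt_self _ (one_sub_adjoint_mul_self_nonneg hT)

theorem isSelfAdjoint_defectOp (T : H →L[ℂ] H) : IsSelfAdjoint (defectOp T) :=
  .of_nonneg (CFC.sqrt_nonneg _)

theorem norm_defectOp_apply_sq (hT : ‖T‖ ≤ 1) (x : H) :
    ‖defectOp T x‖ ^ 2 = ‖x‖ ^ 2 - ‖T x‖ ^ 2 := by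
  rw [apply_norm_sq_eq_inner_adjoint_left, (isSelfAdjoint_defectOp T).adjoint_eq, ← mul_def,
    defectOp_mul_self hT, sub_apply, one_apply_eq_self, inner_sub_left, map_sub,
    inner_self_eq_norm_sq, mul_def, ← apply_norm_sq_eq_inner_adjoint_left]

theorem mul_defectOp (hT : ‖T‖ ≤ 1) : T * defectOp T = defectOp (adjoint T) * T := by
  have hsemiconj : SemiconjBy T (1 - adjoint T * T) (1 - adjoint (adjoint T) * adjoint T) := by
    rw [adjoint_adjoint, SemiconjBy]
    noncomm_ring
  have hsa (S : H →L[ℂ] H) : IsSelfAdjoint (1 - adjoint S * S) :=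
    (IsSelfAdjoint.one _).sub (by simpa only [star_eq_adjoint] using IsSelfAdjoint.star_mul_self S)
  simp only [defectOp, CFC.sqrt_eq_real_sqrt _ (one_sub_adjoint_mul_self_nonneg hT),
    CFC.sqrt_eq_real_sqrt _ (one_sub_adjoint_mul_self_nonneg ((adjoint.norm_map T).trans_le hT))]
  rw [cfcₙ_eq_cfc, cfcₙ_eq_cfc]
  exact (hsemiconj.cfc_real (hsa T) (hsa _) Real.continuous_sqrt).eq

theorem adjoint_mul_defectOp_adjoint (hT : ‖T‖ ≤ 1) :
    adjoint T * defectOp (adjoint T) = defectOp T * adjoint T := by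
  simpa only [adjoint_adjoint] using mul_defectOp ((adjoint.norm_map T).trans_le hT)

theorem defectSpace_eq_range [FiniteDimensional ℂ (defectSpace T)] :
    defectSpace T = LinearMap.range (defectOp T : H →ₗ[ℂ] H) :=
  have : FiniteDimensional ℂ (LinearMap.range (defectOp T : H →ₗ[ℂ] H)) :=
    Submodule.finiteDimensional_of_le (S₂ := defectSpace T) (Submodule.le_topologicalClosure _)
  (Submodule.closed_of_finiteDimensional _).submodule_topologicalClosure_eq

theorem adjoint_apply_mem_defectSpace (hT : ‖T‖ ≤ 1) {y : H}
    (hy : y ∈ defectSpace (adjoint T)) : adjoint T y ∈ defectSpace T := by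
  have hrange : (LinearMap.range (defectOp (adjoint T) : H →ₗ[ℂ] H)).map (adjoint T : H →ₗ[ℂ] H)
      ≤ LinearMap.range (defectOp T : H →ₗ[ℂ] H) := by
    rintro _ ⟨_, ⟨z, rfl⟩, rfl⟩
    exact ⟨adjoint T z, congr($(adjoint_mul_defectOp_adjoint hT) z).symm⟩
  exact Submodule.topologicalClosure_mono hrange
    (Submodule.topologicalClosure_map (adjoint T) _ ⟨y, hy, rfl⟩)

theorem eq_zero_of_mem_defectSpace {u : H} (hu : u ∈ defectSpace T)
    (horth : ∀ w, ⟪u, defectOp T w⟫_ℂ = 0) : u = 0 := by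
  have hu' : u ∈ (defectSpace T)ᗮ := by
    rw [defectSpace, Submodule.orthogonal_closure]
    rintro _ ⟨w, rfl⟩
    rw [inner_eq_zero_symm]
    exact horth w
  exact (Submodule.inf_orthogonal_eq_bot _).le ⟨hu, hu'⟩

theorem exists_linearIsometryEquiv_defectSpace {E : Type*} [NormedAddCommGroup E]
    [Module ℂ E] [FiniteDimensional ℂ (defectSpace T)] [FiniteDimensional ℂ E]
    (hdim : Module.finrank ℂ E = Module.finrank ℂ (defectSpace T))
    (R : H →L[ℂ] E) (hR : ∀ x, ‖R x‖ = ‖defectOp T x‖) :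
    ∃ φ : E ≃ₗᵢ[ℂ] defectSpace T, ∀ x, (φ (R x) : H) = defectOp T x := by
  obtain ⟨φ, hφ⟩ := (defectOp T : H →ₗ[ℂ] H).exists_linearIsometryEquiv_range_of_norm_eq
    (R : H →ₗ[ℂ] E) hR (by rw [hdim, defectSpace_eq_range])
  exact ⟨φ.trans (.ofEq _ _ defectSpace_eq_range.symm), hφ⟩

end Defect

section Dilation

variable {H : Type*} [NormedAddCommGroup H] [InnerProductSpace ℂ H]
  {E : Type*} [NormedAddCommGroup E] [InnerProductSpace ℂ E]
  {U : WithLp 2 (H × E) →L[ℂ] WithLp 2 (H × E)}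

variable (U) in
def lowerLeftBlock : H →L[ℂ] E :=
  sndL 2 ℂ H E ∘L U ∘L
    ((prodContinuousLinearEquiv 2 ℂ H E).symm : H × E →L[ℂ] WithLp 2 (H × E)) ∘L
    ContinuousLinearMap.inl ℂ H E

@[simp]
theorem lowerLeftBlock_apply (x : H) : lowerLeftBlock U x = (U (toLp 2 (x, 0))).snd := rfl

variable [CompleteSpace H] [CompleteSpace E] {T : H →L[ℂ] H}

theorem IsUnitaryDilation.fst_apply (hU : IsUnitaryDilation T U) (x : H) :
    (U (toLp 2 (x, 0))).fst = T x :=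
  (hU.2 x).symm

theorem isUnitaryDilation_adjoint (hU : IsUnitaryDilation T U) :
    IsUnitaryDilation (adjoint T) (adjoint U) := by
  refine ⟨by simpa only [star_eq_adjoint] using Unitary.star_mem hU.1, fun y => ?_⟩
  refine ext_inner_left ℂ fun x => ?_
  have := adjoint_inner_right U (toLp 2 (x, 0)) (toLp 2 (y, 0))
  rw [adjoint_inner_right, ← hU.fst_apply]
  simpa using this.symm

theorem IsUnitaryDilation.norm_lowerLeftBlock_apply (hU : IsUnitaryDilation T U)
    (hT : ‖T‖ ≤ 1) (x : H) : ‖lowerLeftBlock U x‖ = ‖defectOp T x‖ := by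
  have h := prod_norm_sq_eq_of_L2 (U (toLp 2 (x, 0)))
  rw [norm_map_of_mem_unitary hU.1, norm_toLp_fst, hU.fst_apply] at h
  rw [← sq_eq_sq₀ (norm_nonneg _) (norm_nonneg _), norm_defectOp_apply_sq hT,
    lowerLeftBlock_apply]
  linarith

theorem fst_apply_inr_eq_of_lowerLeftBlock_adjoint {K : Submodule ℂ H} {S : H →L[ℂ] H}
    (hS : IsSelfAdjoint S) (ω : E ≃ₗᵢ[ℂ] K)
    (hω : ∀ y, (ω (lowerLeftBlock (adjoint U) y) : H) = S y) (e : E) :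
    (U (toLp 2 (0, e))).fst = S (ω e) := by
  refine ext_inner_right ℂ fun y => ?_
  have h := adjoint_inner_right U (toLp 2 (0, e)) (toLp 2 (y, 0))
  simp only [prod_inner_apply, ofLp_fst, ofLp_snd, inner_zero_left, inner_zero_right,
    zero_add, add_zero] at h
  rw [← h, ← hS.adjoint_eq, adjoint_inner_left, ← hω, ← Submodule.coe_inner,
    LinearIsometryEquiv.inner_map_map, lowerLeftBlock_apply]

theorem IsUnitaryDilation.snd_apply_inr (hU : IsUnitaryDilation T U) (hT : ‖T‖ ≤ 1)
    {ω : E ≃ₗᵢ[ℂ] defectSpace (adjoint T)} {ωs : E ≃ₗᵢ[ℂ] defectSpace T}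
    (hB : ∀ e, (U (toLp 2 (0, e))).fst = defectOp (adjoint T) (ω e))
    (hC : ∀ x, (ωs (lowerLeftBlock U x) : H) = defectOp T x) (e : E) :
    (ωs (U (toLp 2 (0, e))).snd : H) = -adjoint T (ω e) := by
  rw [eq_neg_iff_add_eq_zero]
  refine eq_zero_of_mem_defectSpace
    (add_mem (ωs _).2 (adjoint_apply_mem_defectSpace hT (ω e).2)) fun w => ?_
  have horth := inner_map_map_of_mem_unitary hU.1 (toLp 2 (0, e)) (toLp 2 (w, 0))
  simp only [prod_inner_apply, ofLp_fst, ofLp_snd, inner_zero_left, inner_zero_right, add_zero,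
    hU.fst_apply] at horth
  have hlower : ⟪(ωs (U (toLp 2 (0, e))).snd : H), defectOp T w⟫_ℂ
      = ⟪(U (toLp 2 (0, e))).snd, lowerLeftBlock U w⟫_ℂ := by
    rw [← hC w, ← Submodule.coe_inner, LinearIsometryEquiv.inner_map_map]
  have hupper : ⟪adjoint T (ω e), defectOp T w⟫_ℂ = ⟪(U (toLp 2 (0, e))).fst, T w⟫_ℂ := by
    rw [adjoint_inner_left, ← mul_apply_eq_comp, mul_defectOp hT, mul_apply_eq_comp,
      ← (isSelfAdjoint_defectOp _).adjoint_eq, adjoint_inner_right, hB]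
  rw [inner_add_left, hlower, hupper, lowerLeftBlock_apply]
  linear_combination horth

end Dilation

theorem unitary_dilation_structure
    {H : Type*} [NormedAddCommGroup H] [InnerProductSpace ℂ H] [CompleteSpace H]
    {E : Type*} [NormedAddCommGroup E] [InnerProductSpace ℂ E] [CompleteSpace E]
    (N : ℕ) (T : H →L[ℂ] H) (hT : ‖T‖ ≤ 1)
    [FiniteDimensional ℂ (defectSpace T)]
    [FiniteDimensional ℂ (defectSpace (ContinuousLinearMap.adjoint T))]
    [FiniteDimensional ℂ E]
    (hdT : Module.finrank ℂ (defectSpace T) = N)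
    (hdTs : Module.finrank ℂ (defectSpace (ContinuousLinearMap.adjoint T)) = N)
    (hE : Module.finrank ℂ E = N)
    (U : WithLp 2 (H × E) →L[ℂ] WithLp 2 (H × E))
    (hU : IsUnitaryDilation T U) :
    ∃ (ω : E ≃ₗᵢ[ℂ] defectSpace (ContinuousLinearMap.adjoint T))
      (ωs : E ≃ₗᵢ[ℂ] defectSpace T),
      ∀ (x : H) (e : E),
        let v := WithLp.equiv 2 (H × E) (U ((WithLp.equiv 2 (H × E)).symm (x, e)))
        v.1 = T x + defectOp (ContinuousLinearMap.adjoint T) (ω e : H) ∧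
          (ωs v.2 : H) = defectOp T x - ContinuousLinearMap.adjoint T (ω e : H) := by
  obtain ⟨ωs, hωs⟩ := exists_linearIsometryEquiv_defectSpace (hE.trans hdT.symm)
    (lowerLeftBlock U) (hU.norm_lowerLeftBlock_apply hT)
  obtain ⟨ω, hω⟩ := exists_linearIsometryEquiv_defectSpace (hE.trans hdTs.symm)
    (lowerLeftBlock (adjoint U))
    ((isUnitaryDilation_adjoint hU).norm_lowerLeftBlock_apply ((adjoint.norm_map T).trans_le hT))
  have hB := fst_apply_inr_eq_of_lowerLeftBlock_adjoint (isSelfAdjoint_defectOp (adjoint T)) ω hω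
  refine ⟨ω, ωs, fun x e => ?_⟩
  have hsplit : toLp 2 (x, e) = toLp 2 (x, 0) + toLp 2 (0, e) := by simp [← toLp_add]
  simp only [WithLp.equiv_apply, WithLp.equiv_symm_apply, ofLp_fst, ofLp_snd, hsplit, map_add,
    add_fst, add_snd, hU.fst_apply, hB, true_and]
  rw [Submodule.coe_add, ← lowerLeftBlock_apply, hωs, hU.snd_apply_inr hT hB hωs, sub_eq_add_neg]
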